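/- arXiv:1701.05673 — 2 statements merged into one kernel-verified Lean document; each statement's English description precedes it below -/
import Mathlib

section
/- Suppose x ∈ ℝⁿ satisfies 0 ≤ x entrywise and eᵀx ≤ 1, and let y = x − (F'ₓ)⁻¹F(x). Then eᵀy = (1 − α − α(eᵀx)²)/(1 − 2α(eᵀx)). -/
/-!
Since the columns of `R` sum to one, `eᵀR(u ⊗ w) = (eᵀu)(eᵀw)`, so with `s = eᵀx` every column
of `F'ₓ` sums to `1 - 2αs` and `eᵀF(x) = s - αs² - (1 - α)`. Hence `e` is a left eigenvector of
`F'ₓ`, and so of its inverse with eigenvalue `(1 - 2αs)⁻¹`, which gives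
`eᵀy = s - (s - αs² - (1 - α)) / (1 - 2αs)`. Invertibility of `F'ₓ = I - A` comes from strict
column diagonal dominance: `A = αR(x ⊗ I + I ⊗ x)` is nonnegative with column sums `2αs < 1`.
-/

open Matrix BigOperators Finset Filter

noncomputable section

/-- Kronecker product of two vectors: `(u ⊗ w)_{(i,j)} = u_i w_j`. -/
def kron {n : ℕ} (u w : Fin n → ℝ) : Fin n × Fin n → ℝ := fun p => u p.1 * w p.2

/-- `u ⊗ I` : the `n² × n` Kronecker product of a vector with the identity,
so that `(u ⊗ I) w = u ⊗ w`. -/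
def kronVecId {n : ℕ} (u : Fin n → ℝ) : Matrix (Fin n × Fin n) (Fin n) ℝ :=
  Matrix.of fun p k => u p.1 * (if p.2 = k then (1 : ℝ) else 0)

/-- `I ⊗ u` : the `n² × n` Kronecker product of the identity with a vector,
so that `(I ⊗ u) w = w ⊗ u`. -/
def idKronVec {n : ℕ} (u : Fin n → ℝ) : Matrix (Fin n × Fin n) (Fin n) ℝ :=
  Matrix.of fun p k => (if p.1 = k then (1 : ℝ) else 0) * u p.2

/-- `F(x) = x − α R (x ⊗ x) − (1 − α) v`. -/
def Fmap {n : ℕ} (α : ℝ) (R : Matrix (Fin n) (Fin n × Fin n) ℝ) (v : Fin n → ℝ)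
    (x : Fin n → ℝ) : Fin n → ℝ :=
  x - α • R.mulVec (kron x x) - (1 - α) • v

/-- `F'ₓ = I − α R (x ⊗ I + I ⊗ x)`. -/
def Fprime {n : ℕ} (α : ℝ) (R : Matrix (Fin n) (Fin n × Fin n) ℝ)
    (x : Fin n → ℝ) : Matrix (Fin n) (Fin n) ℝ :=
  1 - α • (R * (kronVecId x + idKronVec x))

section ColumnSums

variable {m n o : Type*} [Fintype m] [Fintype n]

theorem sum_mulVec_of_sum_col_eq {R : Type*} [NonUnitalNonAssocSemiring R] {A : Matrix m n R}
    {c : R} (hA : ∀ j, ∑ i, A i j = c) (w : n → R) : ∑ i, (A *ᵥ w) i = c * ∑ j, w j := by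
  simp only [mulVec, dotProduct]
  rw [Finset.sum_comm, Finset.mul_sum]
  exact Finset.sum_congr rfl fun j _ => by rw [← Finset.sum_mul, hA]

theorem sum_mul_apply_of_sum_col_eq {R : Type*} [NonUnitalNonAssocSemiring R]
    {A : Matrix m n R} {c : R} (hA : ∀ j, ∑ i, A i j = c) (B : Matrix n o R) (k : o) :
    ∑ i, (A * B) i k = c * ∑ j, B j k :=
  sum_mulVec_of_sum_col_eq hA fun j => B j k

theorem sum_inv_apply_of_sum_col_eq {K : Type*} [Field K] [DecidableEq n] {M : Matrix n n K}
    {c : K} (hM : M.det ≠ 0) (h : ∀ j, ∑ i, M i j = c) (k : n) : ∑ i, M⁻¹ i k = c⁻¹ := by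
  have hsum := sum_mul_apply_of_sum_col_eq h M⁻¹ k
  rw [mul_nonsing_inv M hM.isUnit] at hsum
  simp only [one_apply, sum_ite_eq', mem_univ, if_true] at hsum
  exact eq_inv_of_mul_eq_one_right hsum.symm

theorem det_one_sub_ne_zero_of_sum_col_lt_one [DecidableEq n] {A : Matrix n n ℝ}
    (hA0 : ∀ i j, 0 ≤ A i j) (hA : ∀ j, ∑ i, A i j < 1) : (1 - A).det ≠ 0 := by
  refine det_ne_zero_of_sum_col_lt_diag fun k => ?_
  have hkk : A k k < 1 := (single_le_sum (fun i _ => hA0 i k) (mem_univ k)).trans_lt (hA k)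
  have hoff : ∀ i ∈ univ.erase k, ‖(1 - A) i k‖ = A i k := fun i hi => by
    simp [one_apply_ne (ne_of_mem_erase hi), abs_of_nonneg (hA0 i k)]
  rw [sum_congr rfl hoff, sum_erase_eq_sub (mem_univ k), Matrix.sub_apply, one_apply_eq,
    Real.norm_of_nonneg (sub_nonneg.mpr hkk.le)]
  linarith [hA k]

end ColumnSums

section Kronecker

variable {n : ℕ}

theorem sum_kron (u w : Fin n → ℝ) : ∑ p, kron u w p = (∑ i, u i) * ∑ j, w j := by
  simp only [kron, Fintype.sum_prod_type, sum_mul_sum]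

theorem sum_kronVecId_apply (u : Fin n → ℝ) (k : Fin n) : ∑ p, kronVecId u p k = ∑ i, u i := by
  simp [kronVecId, Fintype.sum_prod_type]

theorem sum_idKronVec_apply (u : Fin n → ℝ) (k : Fin n) : ∑ p, idKronVec u p k = ∑ i, u i := by
  simp [idKronVec, Fintype.sum_prod_type]

end Kronecker

section NewtonStep

variable {n : ℕ} {α : ℝ} {R : Matrix (Fin n) (Fin n × Fin n) ℝ}

theorem sum_Fmap (hRcol : ∀ p, ∑ i, R i p = 1) (v x : Fin n → ℝ) :
    ∑ i, Fmap α R v x i = ∑ i, x i - α * (∑ i, x i) ^ 2 - (1 - α) * ∑ i, v i := by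
  simp only [Fmap, Pi.sub_apply, Pi.smul_apply, smul_eq_mul, sum_sub_distrib, ← mul_sum,
    sum_mulVec_of_sum_col_eq hRcol, sum_kron]
  ring

theorem sum_smul_mul_kronSum_apply (hRcol : ∀ p, ∑ i, R i p = 1) (x : Fin n → ℝ) (k : Fin n) :
    ∑ i, (α • (R * (kronVecId x + idKronVec x))) i k = 2 * α * ∑ i, x i := by
  simp only [Matrix.smul_apply, smul_eq_mul, ← mul_sum, sum_mul_apply_of_sum_col_eq hRcol,
    Matrix.add_apply, sum_add_distrib, sum_kronVecId_apply, sum_idKronVec_apply]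
  ring

theorem sum_Fprime_apply (hRcol : ∀ p, ∑ i, R i p = 1) (x : Fin n → ℝ) (k : Fin n) :
    ∑ i, Fprime α R x i k = 1 - 2 * α * ∑ i, x i := by
  simp only [Fprime, Matrix.sub_apply, sum_sub_distrib, sum_smul_mul_kronSum_apply hRcol,
    one_apply, sum_ite_eq', mem_univ, if_true]

theorem det_Fprime_ne_zero (hα0 : 0 ≤ α) (hR0 : ∀ i p, 0 ≤ R i p)
    (hRcol : ∀ p, ∑ i, R i p = 1) {x : Fin n → ℝ} (hx0 : 0 ≤ x) (hsmall : 2 * α * ∑ i, x i < 1) :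
    (Fprime α R x).det ≠ 0 := by
  refine det_one_sub_ne_zero_of_sum_col_lt_one (fun i k => ?_)
    (fun k => (sum_smul_mul_kronSum_apply hRcol x k).trans_lt hsmall)
  refine mul_nonneg hα0 (sum_nonneg fun p _ => mul_nonneg (hR0 i p) ?_)
  have hleft : 0 ≤ kronVecId x p k := mul_nonneg (hx0 _) (by split_ifs <;> norm_num)
  have hright : 0 ≤ idKronVec x p k := mul_nonneg (by split_ifs <;> norm_num) (hx0 _)
  exact add_nonneg hleft hright

end NewtonStep

theorem stmt7_general {n : ℕ} (α : ℝ) (hα0 : 0 < α) (hα : α < 1 / 2)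
    (R : Matrix (Fin n) (Fin n × Fin n) ℝ) (hR0 : ∀ i p, 0 ≤ R i p)
    (hRcol : ∀ p, ∑ i, R i p = 1)
    (v : Fin n → ℝ) (hv1 : ∑ i, v i = 1)
    (x : Fin n → ℝ) (hx0 : 0 ≤ x) (hx1 : ∑ i, x i ≤ 1)
    (y : Fin n → ℝ) (hy : y = x - (Fprime α R x)⁻¹.mulVec (Fmap α R v x)) :
    ∑ i, y i = (1 - α - α * (∑ i, x i) ^ 2) / (1 - 2 * α * (∑ i, x i)) := by
  have hsmall : 2 * α * ∑ i, x i < 1 := by nlinarith [sum_nonneg fun i (_ : i ∈ univ) => hx0 i]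
  have hinv := sum_inv_apply_of_sum_col_eq (det_Fprime_ne_zero hα0.le hR0 hRcol hx0 hsmall)
    (sum_Fprime_apply hRcol x)
  rw [hy]
  simp only [Pi.sub_apply, sum_sub_distrib, sum_mulVec_of_sum_col_eq hinv, sum_Fmap hRcol, hv1]
  have hc : 1 - 2 * α * ∑ i, x i ≠ 0 := (sub_pos.mpr hsmall).ne'
  rw [eq_div_iff hc]
  linear_combination (-(∑ i, x i - α * (∑ i, x i) ^ 2 - (1 - α) * 1)) * inv_mul_cancel₀ hc

theorem stmt7 {n : ℕ} (hn : 1 ≤ n) (α : ℝ) (hα0 : 0 < α) (hα : α < 1 / 2)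
    (R : Matrix (Fin n) (Fin n × Fin n) ℝ) (hR0 : ∀ i p, 0 ≤ R i p)
    (hRcol : ∀ p, ∑ i, R i p = 1)
    (v : Fin n → ℝ) (hv0 : 0 ≤ v) (hv1 : ∑ i, v i = 1)
    (x : Fin n → ℝ) (hx0 : 0 ≤ x) (hx1 : ∑ i, x i ≤ 1)
    (y : Fin n → ℝ) (hy : y = x - (Fprime α R x)⁻¹.mulVec (Fmap α R v x)) :
    ∑ i, y i = (1 - α - α * (∑ i, x i) ^ 2) / (1 - 2 * α * (∑ i, x i)) :=
  stmt7_general α hα0 hα R hR0 hRcol v hv1 x hx0 hx1 y hy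
end
end

section
/- Suppose x ∈ ℝⁿ satisfies F(x) ≤ 0 entrywise, 0 ≤ x entrywise, and eᵀx ≤ 1, and let z ∈ ℝⁿ satisfy 0 ≤ z ≤ x entrywise. Let y = x − (F'_z)⁻¹F(x). Then F(y) = −αR((x − z) ⊗ (y − x) + (y − x) ⊗ (x − z)) − αR((y − x) ⊗ (y − x)); in particular F(y) ≤ 0 entrywise. -/
open Matrix BigOperators Finset Filter

noncomputable section

/-!
Since `F` is quadratic, `F (x + d) = F x + F'_z d - α R ((x - z) ⊗ d + d ⊗ (x - z)) - α R (d ⊗ d)`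
holds exactly for every `d`; the Newton step `d = y - x` makes the first two terms cancel.
For the sign, `F'_z = I - t` where `t ≥ 0` has column sums `2 α ∑ zᵢ < 1`, so `I - t` is
invertible and inverse-positive; hence `d ≥ 0` from `F'_z d = -F x ≥ 0`, and both remaining
terms are nonpositive because `x - z ≥ 0`.
-/

section InversePositivity

variable {ι : Type*} [Fintype ι]

lemma eq_zero_of_le_mulVec_of_sum_col_lt_one {t : Matrix ι ι ℝ} (hcol : ∀ j, ∑ i, t i j < 1)
    {m : ι → ℝ} (hm : 0 ≤ m) (hle : m ≤ t *ᵥ m) : m = 0 := by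
  have hterm_nonneg : ∀ j, 0 ≤ (1 - ∑ i, t i j) * m j := fun j =>
    mul_nonneg (sub_nonneg.mpr (hcol j).le) (hm j)
  have hsum : ∑ j, (1 - ∑ i, t i j) * m j ≤ 0 := by
    have : ∑ i, m i ≤ ∑ j, (∑ i, t i j) * m j :=
      calc ∑ i, m i ≤ ∑ i, (t *ᵥ m) i := Finset.sum_le_sum fun i _ => hle i
        _ = ∑ j, (∑ i, t i j) * m j := by
          simp only [mulVec, dotProduct, Finset.sum_mul]
          exact Finset.sum_comm
    simpa [sub_mul, Finset.sum_sub_distrib] using this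
  have hterm := (Finset.sum_eq_zero_iff_of_nonneg fun j _ => hterm_nonneg j).mp
    (le_antisymm hsum (Finset.sum_nonneg fun j _ => hterm_nonneg j))
  funext j
  exact (mul_eq_zero.mp (hterm j (Finset.mem_univ j))).resolve_left (sub_pos.mpr (hcol j)).ne'

variable [DecidableEq ι] {t : Matrix ι ι ℝ}

-- The negative part `m` of `w` satisfies `m ≤ t m`, so it vanishes.
lemma nonneg_of_one_sub_mulVec_nonneg (ht : ∀ i j, 0 ≤ t i j) (hcol : ∀ j, ∑ i, t i j < 1)
    {w : ι → ℝ} (hw : 0 ≤ (1 - t) *ᵥ w) : 0 ≤ w := by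
  set m : ι → ℝ := fun i => max (-w i) 0
  have hm : 0 ≤ m := fun i => le_max_right _ _
  have hle : m ≤ t *ᵥ m := by
    intro i
    have htw : (t *ᵥ w) i ≤ w i := by
      simpa [sub_mulVec] using hw i
    have : -(t *ᵥ w) i ≤ (t *ᵥ m) i := by
      simp only [mulVec, dotProduct, ← Finset.sum_neg_distrib, ← mul_neg]
      exact Finset.sum_le_sum fun j _ => mul_le_mul_of_nonneg_left (le_max_left _ _) (ht i j)
    exact max_le (by linarith) (Finset.sum_nonneg fun j _ => mul_nonneg (ht i j) (hm j))
  intro i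
  have := congrFun (eq_zero_of_le_mulVec_of_sum_col_lt_one hcol hm hle) i
  simp only [m, Pi.zero_apply, max_eq_right_iff, neg_nonpos] at this ⊢
  exact this

lemma isUnit_one_sub_of_sum_col_lt_one (ht : ∀ i j, 0 ≤ t i j) (hcol : ∀ j, ∑ i, t i j < 1) :
    IsUnit (1 - t) := by
  refine mulVec_injective_iff_isUnit.mp fun w w' hww' => ?_
  have hpos := nonneg_of_one_sub_mulVec_nonneg ht hcol (w := w - w')
    (by rw [mulVec_sub, hww', sub_self])
  have hneg := nonneg_of_one_sub_mulVec_nonneg ht hcol (w := w' - w)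
    (by rw [mulVec_sub, hww', sub_self])
  exact le_antisymm (sub_nonneg.mp hneg) (sub_nonneg.mp hpos)

end InversePositivity

lemma mulVec_nonneg_of_nonneg {m l : Type*} [Fintype l] {A : Matrix m l ℝ} (hA : ∀ i j, 0 ≤ A i j)
    {w : l → ℝ} (hw : 0 ≤ w) : 0 ≤ A *ᵥ w :=
  fun i => Finset.sum_nonneg fun j _ => mul_nonneg (hA i j) (hw j)

section Kronecker

variable {n : ℕ}

lemma kron_nonneg {u w : Fin n → ℝ} (hu : 0 ≤ u) (hw : 0 ≤ w) : 0 ≤ kron u w :=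
  fun p => mul_nonneg (hu p.1) (hw p.2)

lemma kronVecId_mulVec (u w : Fin n → ℝ) : kronVecId u *ᵥ w = kron u w := by
  funext p
  simp [kronVecId, mulVec, dotProduct, kron]

lemma idKronVec_mulVec (u w : Fin n → ℝ) : idKronVec u *ᵥ w = kron w u := by
  funext p
  simp [idKronVec, mulVec, dotProduct, kron, mul_comm]

lemma kronVecId_add_idKronVec_nonneg {u : Fin n → ℝ} (hu : 0 ≤ u) (p : Fin n × Fin n) (k : Fin n) :
    0 ≤ (kronVecId u + idKronVec u) p k := by
  simp only [Matrix.add_apply, kronVecId, idKronVec, of_apply]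
  exact add_nonneg (mul_nonneg (hu p.1) (by split_ifs <;> norm_num))
    (mul_nonneg (by split_ifs <;> norm_num) (hu p.2))

lemma one_vecMul_kronVecId_add_idKronVec (u : Fin n → ℝ) :
    1 ᵥ* (kronVecId u + idKronVec u) = fun _ => 2 * ∑ i, u i := by
  funext k
  simp [vecMul, dotProduct, kronVecId, idKronVec, Fintype.sum_prod_type, Finset.sum_add_distrib,
    two_mul]

end Kronecker

section Newton

variable {n : ℕ} (α : ℝ) (R : Matrix (Fin n) (Fin n × Fin n) ℝ)

lemma Fprime_mulVec (z d : Fin n → ℝ) :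
    Fprime α R z *ᵥ d = d - α • R *ᵥ (kron z d + kron d z) := by
  rw [Fprime, sub_mulVec, one_mulVec, smul_mulVec, ← mulVec_mulVec, add_mulVec, kronVecId_mulVec,
    idKronVec_mulVec]

lemma Fmap_add (v x z d : Fin n → ℝ) :
    Fmap α R v (x + d) = Fmap α R v x + Fprime α R z *ᵥ d
      - α • R *ᵥ (kron (x - z) d + kron d (x - z)) - α • R *ᵥ kron d d := by
  have hkron : kron (x + d) (x + d)
      = kron x x + (kron (x - z) d + kron d (x - z)) + (kron z d + kron d z) + kron d d := by
    funext p
    simp only [kron, Pi.add_apply, Pi.sub_apply]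
    ring
  rw [Fmap, Fmap, Fprime_mulVec, hkron]
  simp only [mulVec_add, smul_add]
  abel

variable {α R}

lemma exists_Fprime_eq_one_sub (hα0 : 0 < α) (hα : α < 1 / 2) (hR0 : ∀ i p, 0 ≤ R i p)
    (hRcol : ∀ p, ∑ i, R i p = 1) {z : Fin n → ℝ} (hz0 : 0 ≤ z) (hz1 : ∑ i, z i ≤ 1) :
    ∃ t, Fprime α R z = 1 - t ∧ (∀ i j, 0 ≤ t i j) ∧ ∀ j, ∑ i, t i j < 1 := by
  refine ⟨α • (R * (kronVecId z + idKronVec z)), rfl, fun i j => ?_, fun j => ?_⟩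
  · exact mul_nonneg hα0.le <| Finset.sum_nonneg fun p _ =>
      mul_nonneg (hR0 i p) (kronVecId_add_idKronVec_nonneg hz0 p j)
  · have hR : 1 ᵥ* R = 1 := funext fun p => by simpa [vecMul, dotProduct] using hRcol p
    have hsum := congrFun (vecMul_vecMul 1 R (kronVecId z + idKronVec z)) j
    rw [hR, one_vecMul_kronVecId_add_idKronVec] at hsum
    simp only [vecMul, dotProduct, one_mul, Pi.one_apply] at hsum
    simp only [Matrix.smul_apply, smul_eq_mul, ← Finset.mul_sum]
    rw [← hsum]
    nlinarith

end Newton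

theorem stmt10_general {n : ℕ} (α : ℝ) (hα0 : 0 < α) (hα : α < 1 / 2)
    (R : Matrix (Fin n) (Fin n × Fin n) ℝ) (hR0 : ∀ i p, 0 ≤ R i p)
    (hRcol : ∀ p, ∑ i, R i p = 1)
    (v : Fin n → ℝ)
    (x : Fin n → ℝ) (hFx : Fmap α R v x ≤ 0) (hx1 : ∑ i, x i ≤ 1)
    (z : Fin n → ℝ) (hz0 : 0 ≤ z) (hzx : z ≤ x)
    (y : Fin n → ℝ) (hy : y = x - (Fprime α R z)⁻¹.mulVec (Fmap α R v x)) :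
    Fmap α R v y =
      -(α • R.mulVec (kron (x - z) (y - x) + kron (y - x) (x - z)))
        - α • R.mulVec (kron (y - x) (y - x)) ∧
    Fmap α R v y ≤ 0 := by
  obtain ⟨t, hFz, ht, hcol⟩ := exists_Fprime_eq_one_sub hα0 hα hR0 hRcol hz0
    ((Finset.sum_le_sum fun i _ => hzx i).trans hx1)
  have hunit : IsUnit (Fprime α R z) := hFz ▸ isUnit_one_sub_of_sum_col_lt_one ht hcol
  have hstep : Fprime α R z *ᵥ (y - x) = -Fmap α R v x := by
    rw [hy, sub_sub_cancel_left, mulVec_neg, mulVec_mulVec,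
      mul_nonsing_inv _ ((isUnit_iff_isUnit_det _).mp hunit), one_mulVec]
  have hF : Fmap α R v y = -(α • R *ᵥ (kron (x - z) (y - x) + kron (y - x) (x - z)))
      - α • R *ᵥ kron (y - x) (y - x) := by
    rw [← add_sub_cancel x y, Fmap_add α R v x z, add_sub_cancel_left, hstep]
    abel
  have hd : 0 ≤ y - x :=
    nonneg_of_one_sub_mulVec_nonneg ht hcol (hFz ▸ hstep ▸ neg_nonneg.mpr hFx)
  have hxz : 0 ≤ x - z := sub_nonneg.mpr hzx
  refine ⟨hF, hF ▸ fun i => ?_⟩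
  have h1 := mulVec_nonneg_of_nonneg hR0 (add_nonneg (kron_nonneg hxz hd) (kron_nonneg hd hxz)) i
  have h2 := mulVec_nonneg_of_nonneg hR0 (kron_nonneg hd hd) i
  simp only [Pi.sub_apply, Pi.neg_apply, Pi.smul_apply, smul_eq_mul, Pi.zero_apply] at h1 h2 ⊢
  nlinarith

theorem stmt10 {n : ℕ} (hn : 1 ≤ n) (α : ℝ) (hα0 : 0 < α) (hα : α < 1 / 2)
    (R : Matrix (Fin n) (Fin n × Fin n) ℝ) (hR0 : ∀ i p, 0 ≤ R i p)
    (hRcol : ∀ p, ∑ i, R i p = 1)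
    (v : Fin n → ℝ) (hv0 : 0 ≤ v) (hv1 : ∑ i, v i = 1)
    (x : Fin n → ℝ) (hFx : Fmap α R v x ≤ 0) (hx0 : 0 ≤ x) (hx1 : ∑ i, x i ≤ 1)
    (z : Fin n → ℝ) (hz0 : 0 ≤ z) (hzx : z ≤ x)
    (y : Fin n → ℝ) (hy : y = x - (Fprime α R z)⁻¹.mulVec (Fmap α R v x)) :
    Fmap α R v y =
      -(α • R.mulVec (kron (x - z) (y - x) + kron (y - x) (x - z)))
        - α • R.mulVec (kron (y - x) (y - x)) ∧
    Fmap α R v y ≤ 0 :=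
  stmt10_general α hα0 hα R hR0 hRcol v x hFx hx1 z hz0 hzx y hy
end
end
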